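/- arXiv:2410.10191 — 3 statements merged into one kernel-verified Lean document; each statement's English description precedes it below -/
import Mathlib

section
/- Let G be an edge-weighted graph, r > ρ > 0 reals, 𝒫 a partition of V(G) into parts of weak diameter at most ρ, and ⪯ a total order on 𝒫. For X ∈ 𝒫 let D(X) be the union of all parts Y ∈ 𝒫 such that X is weakly 2r-reachable from Y, and let 𝒟 = {D(X) : X ∈ 𝒫}. Then 𝒟 is an r-cover of G, every member of 𝒟 has weak diameter at most (4+3ρ/r)·r, and the overlap of 𝒟 is at most wcol_{2r}(G,𝒫,⪯). -/
open scoped ENNReal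

namespace ScatterDim

variable {V : Type}





/-- Total weight of a walk in an edge-weighted graph. -/
noncomputable def walkWeight {G : SimpleGraph V} (w : Sym2 V → ℝ≥0∞)
    {u v : V} (p : G.Walk u v) : ℝ≥0∞ :=
  (p.edges.map w).sum

/-- Shortest-path metric of an edge-weighted graph: the infimum of the total
weights of walks between the two vertices. -/
noncomputable def gdist (G : SimpleGraph V) (w : Sym2 V → ℝ≥0∞) (u v : V) : ℝ≥0∞ :=
  ⨅ p : G.Walk u v, walkWeight w p

/-- Shortest-path distance measured within the subgraph induced on `S`
(`⊤` if one of the endpoints is not in `S`). -/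
noncomputable def distOn (G : SimpleGraph V) (w : Sym2 V → ℝ≥0∞) (S : Set V)
    (u v : V) : ℝ≥0∞ :=
  ⨅ (hu : u ∈ S), ⨅ (hv : v ∈ S), ⨅ (p : (G.induce S).Walk ⟨u, hu⟩ ⟨v, hv⟩),
    (p.edges.map (fun e => w (e.map Subtype.val))).sum

/-- Distance between two sets of vertices inside the subgraph induced on `S`. -/
noncomputable def setDistOn (G : SimpleGraph V) (w : Sym2 V → ℝ≥0∞) (S : Set V)
    (A B : Set V) : ℝ≥0∞ :=
  ⨅ a ∈ A, ⨅ b ∈ B, distOn G w S a b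

/-- Distance from a point to a set. -/
noncomputable def pdist (G : SimpleGraph V) (w : Sym2 V → ℝ≥0∞) (u : V) (X : Set V) : ℝ≥0∞ :=
  ⨅ x ∈ X, gdist G w u x

/-- `Y` is weakly `r`-reachable from `X` (with respect to the partition `P`
ordered by `le`): there is a path of total weight at most `r` from a vertex of `X`
to a vertex of `Y` in the subgraph induced on the union of the parts `Z` with `Y ⪯ Z`. -/
def WReach (G : SimpleGraph V) (w : Sym2 V → ℝ≥0∞) (P : Set (Set V))
    (le : Set V → Set V → Prop) (r : ℝ) (X Y : Set V) : Prop :=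
  setDistOn G w (⋃₀ {Z | Z ∈ P ∧ le Y Z}) X Y ≤ ENNReal.ofReal r

/-- The weak coloring number of `G` with respect to the partition `P`
and the order `le`: the maximum over `X ∈ P` of the number of parts weakly
`r`-reachable from `X`. -/
noncomputable def wcol (G : SimpleGraph V) (w : Sym2 V → ℝ≥0∞) (P : Set (Set V))
    (le : Set V → Set V → Prop) (r : ℝ) : ℕ :=
  ⨆ X ∈ P, {Y | Y ∈ P ∧ WReach G w P le r X Y}.ncard

/-- `le` is a total (linear) order on the collection `P`. -/
def IsLinearOrderOn {α : Type} (P : Set α) (le : α → α → Prop) : Prop :=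
  (∀ X ∈ P, le X X) ∧
  (∀ X ∈ P, ∀ Y ∈ P, le X Y → le Y X → X = Y) ∧
  (∀ X ∈ P, ∀ Y ∈ P, ∀ Z ∈ P, le X Y → le Y Z → le X Z) ∧
  (∀ X ∈ P, ∀ Y ∈ P, le X Y ∨ le Y X)

/-- An `ε`-ladder of width `r` and length `ℓ` in the metric `dist`. -/
def IsLadder (dist : V → V → ℝ≥0∞) (ε r : ℝ) (ℓ : ℕ) (x p : Fin ℓ → V) : Prop :=
  (∀ i j : Fin ℓ, j < i → dist (p j) (x i) ≤ ENNReal.ofReal r) ∧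
  (∀ i : Fin ℓ, ENNReal.ofReal ((1 + ε) * r) < dist (p i) (x i))

/-- `G` contains the complete graph on `h` vertices as a minor, witnessed by
pairwise disjoint connected nonempty branch sets that are pairwise adjacent. -/
def HasCompleteMinor (G : SimpleGraph V) (h : ℕ) : Prop :=
  ∃ B : Fin h → Set V,
    (∀ i, (G.induce (B i)).Connected) ∧
    (∀ i j, i ≠ j → Disjoint (B i) (B j)) ∧
    (∀ i j, i ≠ j → ∃ u ∈ B i, ∃ v ∈ B j, G.Adj u v)

/-- `(T, bag)` is a tree decomposition of `G`. -/
def IsTreeDecompOf {ι : Type} (G : SimpleGraph V) (T : SimpleGraph ι) (bag : ι → Set V) : Prop :=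
  T.IsTree ∧
  (∀ u v : V, G.Adj u v → ∃ t, u ∈ bag t ∧ v ∈ bag t) ∧
  (∀ v : V, (T.induce {t | v ∈ bag t}).Connected)

/-- `G` has treewidth at most `n`. -/
def TreewidthAtMost (G : SimpleGraph V) (n : ℕ) : Prop :=
  ∃ (ι : Type) (T : SimpleGraph ι) (bag : ι → Set V),
    IsTreeDecompOf G T bag ∧ ∀ t, (bag t).ncard ≤ n + 1

/-- `D` is an `r`-cover of the edge-weighted graph `(G, w)`. -/
def IsCover (G : SimpleGraph V) (w : Sym2 V → ℝ≥0∞) (r : ℝ) (D : Set (Set V)) : Prop :=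
  ∀ v : V, ∃ A ∈ D, ∀ u : V, gdist G w v u ≤ ENNReal.ofReal r → u ∈ A



section AuxLemmas

open SimpleGraph

variable {G : SimpleGraph V} (w : Sym2 V → ℝ≥0∞)

lemma list_sum_le_of_subperm {l1 l2 : List ℝ≥0∞} (h : l1.Subperm l2) :
    l1.sum ≤ l2.sum := by
  have h' : (l1 : Multiset ℝ≥0∞) ≤ (l2 : Multiset ℝ≥0∞) := h
  obtain ⟨u, hu⟩ := Multiset.le_iff_exists_add.mp h'
  have h2 : (l2 : Multiset ℝ≥0∞).sum = (l1 : Multiset ℝ≥0∞).sum + u.sum := by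
    rw [hu, Multiset.sum_add]
  have h3 : (l1 : Multiset ℝ≥0∞).sum ≤ (l2 : Multiset ℝ≥0∞).sum := by
    rw [h2]; exact le_self_add
  simpa using h3

lemma walkWeight_append {u v x : V} (p : G.Walk u v) (q : G.Walk v x) :
    walkWeight w (p.append q) = walkWeight w p + walkWeight w q := by
  simp [walkWeight, Walk.edges_append]

lemma walkWeight_reverse {u v : V} (p : G.Walk u v) :
    walkWeight w p.reverse = walkWeight w p := by
  simp [walkWeight, Walk.edges_reverse, List.sum_reverse]

lemma gdist_le_walk {u v : V} (p : G.Walk u v) : gdist G w u v ≤ walkWeight w p :=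
  iInf_le _ p

lemma walkWeight_bypass_le [DecidableEq V] {u v : V} (p : G.Walk u v) :
    walkWeight w p.bypass ≤ walkWeight w p := by
  have hsub : p.bypass.edges.Subperm p.edges :=
    (p.bypass_isPath.edges_nodup).subperm (Walk.edges_bypass_subset p)
  have h' : (p.bypass.edges : Multiset (Sym2 V)) ≤ (p.edges : Multiset (Sym2 V)) := hsub
  have h2 : ((p.bypass.edges.map w : List ℝ≥0∞) : Multiset ℝ≥0∞)
      ≤ ((p.edges.map w : List ℝ≥0∞) : Multiset ℝ≥0∞) := by
    simpa using Multiset.map_le_map (f := w) h'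
  exact list_sum_le_of_subperm h2

lemma exists_walk_weight_le [Fintype V] {u v : V} {c : ℝ≥0∞} (hc : c ≠ ⊤)
    (h : gdist G w u v ≤ c) : ∃ p : G.Walk u v, walkWeight w p ≤ c := by
  classical
  have hne : Nonempty (G.Walk u v) := by
    by_contra hne
    rw [not_nonempty_iff] at hne
    have : gdist G w u v = ⊤ := by simp [gdist, iInf_of_empty]
    rw [this] at h
    exact hc (top_le_iff.mp h)
  obtain ⟨p0⟩ := hne
  have hnep : Nonempty (G.Path u v) := ⟨⟨p0.bypass, p0.bypass_isPath⟩⟩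
  obtain ⟨q0, hq0⟩ := Finite.exists_min (fun q : G.Path u v => walkWeight w q.1)
  refine ⟨q0.1, le_trans ?_ h⟩
  refine le_iInf fun p => ?_
  exact le_trans (hq0 ⟨p.bypass, p.bypass_isPath⟩) (walkWeight_bypass_le w p)

lemma gdist_triangle [Fintype V] (u t v : V) :
    gdist G w u v ≤ gdist G w u t + gdist G w t v := by
  by_cases h1 : gdist G w u t = ⊤
  · rw [h1]; simp
  by_cases h2 : gdist G w t v = ⊤
  · rw [h2]; simp
  obtain ⟨p, hp⟩ := exists_walk_weight_le w h1 le_rfl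
  obtain ⟨q, hq⟩ := exists_walk_weight_le w h2 le_rfl
  calc gdist G w u v ≤ walkWeight w (p.append q) := gdist_le_walk w _
    _ = walkWeight w p + walkWeight w q := walkWeight_append w p q
    _ ≤ _ := add_le_add hp hq

lemma gdist_symm_le (u v : V) : gdist G w u v ≤ gdist G w v u :=
  le_iInf fun p =>
    le_trans (gdist_le_walk w p.reverse) (le_of_eq (walkWeight_reverse w p))

lemma gdist_le_of_mem_support {u v t : V} (p : G.Walk u v) (ht : t ∈ p.support) :
    gdist G w u t ≤ walkWeight w p := by
  classical
  calc gdist G w u t ≤ walkWeight w (p.takeUntil t ht) := gdist_le_walk w _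
    _ ≤ walkWeight w p := by
        conv_rhs => rw [← p.take_spec ht]
        rw [walkWeight_append]
        exact le_self_add

lemma exists_induced_walk {S : Set V} {a b : V} (p : G.Walk a b)
    (hsup : ∀ t ∈ p.support, t ∈ S) :
    ∃ q : (G.induce S).Walk ⟨a, hsup a p.start_mem_support⟩ ⟨b, hsup b p.end_mem_support⟩,
      (q.edges.map (fun e => w (e.map Subtype.val))).sum = walkWeight w p := by
  induction p with
  | nil =>
    exact ⟨Walk.nil, by simp [walkWeight]⟩
  | @cons x y z h p ih =>
    obtain ⟨q, hq⟩ := ih (fun t ht => hsup t (by simp [ht]))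
    refine ⟨Walk.cons (by exact h : (G.induce S).Adj ⟨x, _⟩ ⟨y, _⟩) q, ?_⟩
    simp only [Walk.edges_cons, List.map_cons, List.sum_cons, walkWeight] at hq ⊢
    exact congrArg (w s(x, y) + ·) hq

lemma distOn_le_walk {S : Set V} {a b : V} (p : G.Walk a b)
    (hsup : ∀ t ∈ p.support, t ∈ S) :
    distOn G w S a b ≤ walkWeight w p := by
  obtain ⟨q, hq⟩ := exists_induced_walk w p hsup
  rw [distOn]
  refine le_trans (iInf_le _ (hsup a p.start_mem_support)) ?_
  refine le_trans (iInf_le _ (hsup b p.end_mem_support)) ?_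
  exact le_trans (iInf_le _ q) (le_of_eq hq)

lemma gdist_le_distOn {S : Set V} (a b : V) :
    gdist G w a b ≤ distOn G w S a b := by
  rw [distOn]
  refine le_iInf fun ha => le_iInf fun hb => le_iInf fun q => ?_
  let f : G.induce S →g G := ⟨Subtype.val, fun {x y} h => h⟩
  refine le_trans (gdist_le_walk w (q.map f)) (le_of_eq ?_)
  simp only [walkWeight, Walk.edges_map, List.map_map]
  rfl

lemma setDistOn_le {S A B : Set V} {a b : V} (ha : a ∈ A) (hb : b ∈ B) :
    setDistOn G w S A B ≤ distOn G w S a b :=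
  le_trans (iInf₂_le a ha) (iInf₂_le b hb)

lemma exists_mem_le_of_iInf2 {ι : Type} [Finite ι] {A : Set ι} {f : ι → ℝ≥0∞} {c : ℝ≥0∞}
    (hc : c ≠ ⊤) (h : ⨅ a ∈ A, f a ≤ c) : ∃ a ∈ A, f a ≤ c := by
  classical
  rcases A.eq_empty_or_nonempty with rfl | hA
  · simp only [Set.mem_empty_iff_false, iInf_false, iInf_top] at h
    exact absurd (top_le_iff.mp h) hc
  obtain ⟨a, ha, hmin⟩ := Set.exists_min_image A f (Set.toFinite A) hA
  exact ⟨a, ha, le_trans (le_iInf₂ fun b hb => hmin b hb) h⟩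

lemma exists_of_setDistOn [Finite V] {S A B : Set V} {c : ℝ≥0∞} (hc : c ≠ ⊤)
    (h : setDistOn G w S A B ≤ c) :
    ∃ a ∈ A, ∃ b ∈ B, distOn G w S a b ≤ c := by
  obtain ⟨a, ha, h1⟩ := exists_mem_le_of_iInf2 hc h
  obtain ⟨b, hb, h2⟩ := exists_mem_le_of_iInf2 hc h1
  exact ⟨a, ha, b, hb, h2⟩

lemma exists_min_rel {α : Type} {P : Set α} {le : α → α → Prop}
    (hrefl : ∀ X ∈ P, le X X)
    (htrans : ∀ X ∈ P, ∀ Y ∈ P, ∀ Z ∈ P, le X Y → le Y Z → le X Z)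
    (htot : ∀ X ∈ P, ∀ Y ∈ P, le X Y ∨ le Y X)
    {S : Set α} (hS : S.Finite) (hSP : S ⊆ P) (hne : S.Nonempty) :
    ∃ X ∈ S, ∀ Z ∈ S, le X Z := by
  classical
  refine Set.Finite.induction_on
    (motive := fun s _ => s ⊆ P → s.Nonempty → ∃ X ∈ s, ∀ Z ∈ s, le X Z) S hS ?_ ?_ hSP hne
  · intro _ hne'
    exact absurd hne' (by simp)
  · rintro a s ha hs ih hSP' hne'
    have haP : a ∈ P := hSP' (Set.mem_insert _ _)
    rcases s.eq_empty_or_nonempty with rfl | hsne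
    · refine ⟨a, Set.mem_insert _ _, ?_⟩
      intro Z hZ
      rcases Set.mem_insert_iff.mp hZ with rfl | hZs
      · exact hrefl _ haP
      · exact absurd hZs (Set.notMem_empty _)
    · have hsP : s ⊆ P := fun x hx => hSP' (Set.mem_insert_of_mem _ hx)
      obtain ⟨X, hXs, hXmin⟩ := ih hsP hsne
      have hXP : X ∈ P := hsP hXs
      rcases htot X hXP a haP with hXa | haX
      · refine ⟨X, Set.mem_insert_of_mem _ hXs, ?_⟩
        intro Z hZ
        rcases Set.mem_insert_iff.mp hZ with rfl | hZs
        · exact hXa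
        · exact hXmin Z hZs
      · refine ⟨a, Set.mem_insert _ _, ?_⟩
        intro Z hZ
        rcases Set.mem_insert_iff.mp hZ with rfl | hZs
        · exact hrefl _ haP
        · exact htrans a haP X hXP Z (hsP hZs) haX (hXmin Z hZs)

end AuxLemmas


theorem stmt_3 {V : Type} [Fintype V] (G : SimpleGraph V) (w : Sym2 V → ℝ≥0∞)
    (r ρ : ℝ) (hρ : 0 < ρ) (hr : ρ < r)
    (P : Set (Set V)) (hP : Setoid.IsPartition P)
    (hdiam : ∀ X ∈ P, ∀ u ∈ X, ∀ v ∈ X, gdist G w u v ≤ ENNReal.ofReal ρ)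
    (le : Set V → Set V → Prop) (hle : IsLinearOrderOn P le)
    (D : Set V → Set V)
    (hD : ∀ X, D X = ⋃₀ {Y | Y ∈ P ∧ WReach G w P le (2 * r) Y X})
    (𝒟 : Set (Set V)) (h𝒟 : 𝒟 = D '' P) :
    IsCover G w r 𝒟 ∧
    (∀ A ∈ 𝒟, ∀ u ∈ A, ∀ v ∈ A, gdist G w u v ≤ ENNReal.ofReal ((4 + 3 * ρ / r) * r)) ∧
    (∀ v : V, {A | A ∈ 𝒟 ∧ v ∈ A}.ncard ≤ wcol G w P le (2 * r)) := by
  classical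
  have hr0 : 0 < r := lt_trans hρ hr
  have h2r : ENNReal.ofReal r + ENNReal.ofReal r = ENNReal.ofReal (2 * r) := by
    rw [← ENNReal.ofReal_add hr0.le hr0.le]; ring_nf
  refine ⟨?_, ?_, ?_⟩
  · -- cover
    intro v
    obtain ⟨Yv, ⟨hYvP, hvYv⟩, _⟩ := hP.2 v
    have hvB : gdist G w v v ≤ ENNReal.ofReal r :=
      le_trans (le_trans (gdist_le_walk w SimpleGraph.Walk.nil)
        (by simp [walkWeight])) zero_le
    obtain ⟨X, hX𝒮, hXmin⟩ := exists_min_rel hle.1 hle.2.2.1 hle.2.2.2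
      (Set.toFinite {Z | Z ∈ P ∧ ∃ t ∈ Z, gdist G w v t ≤ ENNReal.ofReal r})
      (fun Z hZ => hZ.1) ⟨Yv, hYvP, ⟨v, hvYv, hvB⟩⟩
    refine ⟨D X, by rw [h𝒟]; exact ⟨X, hX𝒮.1, rfl⟩, ?_⟩
    intro u hu
    obtain ⟨Yu, ⟨hYuP, huYu⟩, _⟩ := hP.2 u
    rw [hD]
    refine Set.mem_sUnion.mpr ⟨Yu, ⟨hYuP, ?_⟩, huYu⟩
    obtain ⟨p, hp⟩ := exists_walk_weight_le w ENNReal.ofReal_ne_top hu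
    obtain ⟨x, hxX, hxB⟩ := hX𝒮.2
    obtain ⟨q, hq⟩ := exists_walk_weight_le w ENNReal.ofReal_ne_top hxB
    have hsupp : ∀ t ∈ (p.reverse.append q).support, t ∈ ⋃₀ {Z | Z ∈ P ∧ le X Z} := by
      intro t ht
      have htB : gdist G w v t ≤ ENNReal.ofReal r := by
        rcases (SimpleGraph.Walk.mem_support_append_iff _ _).mp ht with h | h
        · rw [SimpleGraph.Walk.support_reverse, List.mem_reverse] at h
          exact le_trans (gdist_le_of_mem_support w p h) hp
        · exact le_trans (gdist_le_of_mem_support w q h) hq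
      obtain ⟨Zt, ⟨hZtP, htZt⟩, _⟩ := hP.2 t
      exact ⟨Zt, ⟨hZtP, hXmin Zt ⟨hZtP, ⟨t, htZt, htB⟩⟩⟩, htZt⟩
    show setDistOn G w _ Yu X ≤ _
    calc setDistOn G w (⋃₀ {Z | Z ∈ P ∧ le X Z}) Yu X
        ≤ distOn G w (⋃₀ {Z | Z ∈ P ∧ le X Z}) u x := setDistOn_le w huYu hxX
      _ ≤ walkWeight w (p.reverse.append q) := distOn_le_walk w _ hsupp
      _ = walkWeight w p + walkWeight w q := by rw [walkWeight_append, walkWeight_reverse]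
      _ ≤ ENNReal.ofReal r + ENNReal.ofReal r := add_le_add hp hq
      _ = ENNReal.ofReal (2 * r) := h2r
  · -- weak diameter
    rintro A hA u hu v hv
    rw [h𝒟] at hA
    obtain ⟨X, hXP, rfl⟩ := hA
    rw [hD] at hu hv
    obtain ⟨Y1, ⟨hY1P, hWR1⟩, huY1⟩ := hu
    obtain ⟨Y2, ⟨hY2P, hWR2⟩, hvY2⟩ := hv
    obtain ⟨a, haY1, x1, hx1X, hd1⟩ := exists_of_setDistOn w ENNReal.ofReal_ne_top hWR1
    obtain ⟨b, hbY2, x2, hx2X, hd2⟩ := exists_of_setDistOn w ENNReal.ofReal_ne_top hWR2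
    have h1 : gdist G w a x1 ≤ ENNReal.ofReal (2 * r) := le_trans (gdist_le_distOn w a x1) hd1
    have h2 : gdist G w b x2 ≤ ENNReal.ofReal (2 * r) := le_trans (gdist_le_distOn w b x2) hd2
    have hua : gdist G w u a ≤ ENNReal.ofReal ρ := hdiam Y1 hY1P u huY1 a haY1
    have hx12 : gdist G w x1 x2 ≤ ENNReal.ofReal ρ := hdiam X hXP x1 hx1X x2 hx2X
    have hbv : gdist G w b v ≤ ENNReal.ofReal ρ := hdiam Y2 hY2P b hbY2 v hvY2
    have hx2b : gdist G w x2 b ≤ ENNReal.ofReal (2 * r) := le_trans (gdist_symm_le w x2 b) h2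
    have key : gdist G w u v ≤ ENNReal.ofReal ρ + (ENNReal.ofReal (2 * r) +
        (ENNReal.ofReal ρ + (ENNReal.ofReal (2 * r) + ENNReal.ofReal ρ))) := by
      calc gdist G w u v
          ≤ gdist G w u a + gdist G w a v := gdist_triangle w u a v
        _ ≤ gdist G w u a + (gdist G w a x1 + gdist G w x1 v) :=
            add_le_add le_rfl (gdist_triangle w a x1 v)
        _ ≤ gdist G w u a + (gdist G w a x1 + (gdist G w x1 x2 + gdist G w x2 v)) :=
            add_le_add le_rfl (add_le_add le_rfl (gdist_triangle w x1 x2 v))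
        _ ≤ gdist G w u a + (gdist G w a x1 + (gdist G w x1 x2 +
              (gdist G w x2 b + gdist G w b v))) :=
            add_le_add le_rfl (add_le_add le_rfl (add_le_add le_rfl (gdist_triangle w x2 b v)))
        _ ≤ _ := add_le_add hua (add_le_add h1 (add_le_add hx12 (add_le_add hx2b hbv)))
    have e1 : ENNReal.ofReal (2 * r) + ENNReal.ofReal ρ = ENNReal.ofReal (2 * r + ρ) :=
      (ENNReal.ofReal_add (by positivity) hρ.le).symm
    have e2 : ENNReal.ofReal ρ + ENNReal.ofReal (2 * r + ρ) = ENNReal.ofReal (ρ + (2 * r + ρ)) :=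
      (ENNReal.ofReal_add hρ.le (by positivity)).symm
    have e3 : ENNReal.ofReal (2 * r) + ENNReal.ofReal (ρ + (2 * r + ρ)) =
        ENNReal.ofReal (2 * r + (ρ + (2 * r + ρ))) :=
      (ENNReal.ofReal_add (by positivity) (by positivity)).symm
    have e4 : ENNReal.ofReal ρ + ENNReal.ofReal (2 * r + (ρ + (2 * r + ρ))) =
        ENNReal.ofReal (ρ + (2 * r + (ρ + (2 * r + ρ)))) :=
      (ENNReal.ofReal_add hρ.le (by positivity)).symm
    rw [e1, e2, e3, e4] at key
    refine le_trans key (le_of_eq ?_)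
    congr 1
    have hrne : (r : ℝ) ≠ 0 := ne_of_gt hr0
    field_simp
    ring
  · -- overlap
    intro v
    obtain ⟨Yv, ⟨hYvP, hvYv⟩, hYvU⟩ := hP.2 v
    have hsub : {A | A ∈ 𝒟 ∧ v ∈ A} ⊆
        D '' {Y | Y ∈ P ∧ WReach G w P le (2 * r) Yv Y} := by
      rintro A ⟨hA𝒟, hvA⟩
      rw [h𝒟] at hA𝒟
      obtain ⟨X, hXP, rfl⟩ := hA𝒟
      rw [hD] at hvA
      obtain ⟨Y, ⟨hYP, hWR⟩, hvY⟩ := hvA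
      have hYeq : Y = Yv := hYvU Y ⟨hYP, hvY⟩
      rw [hYeq] at hWR
      exact ⟨X, ⟨hXP, hWR⟩, rfl⟩
    have h1 := Set.ncard_le_ncard hsub (Set.toFinite _)
    have h2 : (D '' {Y | Y ∈ P ∧ WReach G w P le (2 * r) Yv Y}).ncard ≤
        {Y | Y ∈ P ∧ WReach G w P le (2 * r) Yv Y}.ncard :=
      Set.ncard_image_le (Set.toFinite _)
    refine le_trans h1 (le_trans h2 ?_)
    rw [wcol]
    have hb1 : BddAbove (Set.range fun (_ : Yv ∈ P) =>
        {Y | Y ∈ P ∧ WReach G w P le (2 * r) Yv Y}.ncard) :=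
      Set.Finite.bddAbove (Set.finite_range _)
    have hb2 : BddAbove (Set.range fun X => ⨆ (_ : X ∈ P),
        {Y | Y ∈ P ∧ WReach G w P le (2 * r) X Y}.ncard) :=
      Set.Finite.bddAbove (Set.finite_range _)
    exact le_trans (le_ciSup hb1 hYvP) (le_ciSup hb2 Yv)


end ScatterDim
end

section
/- For all integers d, k, r ≥ 1, the graph G(k,r,d) has treewidth at most 2k. -/
open scoped ENNReal

namespace ScatterDim

variable {V : Type}





/-- Vertices of the complete rooted `d`-ary tree in which every leaf-to-root
path has `n` edges: sequences over `Fin d` of length at most `n`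
(the root is the empty sequence, children prepend a symbol). -/
def TV (d n : ℕ) : Type := {l : List (Fin d) // l.length ≤ n}

/-- The complete rooted `d`-ary tree (as a graph). -/
def dAryTree (d n : ℕ) : SimpleGraph (TV d n) where
  Adj a b := (∃ i : Fin d, a.1 = i :: b.1) ∨ (∃ i : Fin d, b.1 = i :: a.1)
  symm := ⟨fun a b h => h.symm⟩
  loopless := by
    constructor
    intro a h
    rcases h with ⟨i, h⟩ | ⟨i, h⟩ <;>
      · have := congrArg List.length h
        simp at this

/-- The complete rooted `d`-ary tree with an edge added between every pair of
vertices in ancestor–descendant relation. -/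
def dAryTreeCl (d n : ℕ) : SimpleGraph (TV d n) where
  Adj a b := a ≠ b ∧ (a.1 <:+ b.1 ∨ b.1 <:+ a.1)
  symm := ⟨fun a b h => ⟨h.1.symm, h.2.symm⟩⟩
  loopless := ⟨fun a h => h.1 rfl⟩

/-- Leaves of the complete rooted `d`-ary tree of depth `n`. -/
def leaves (d n : ℕ) : Set (TV d n) := {a | a.1.length = n}

/-- Adjacency after creating a twin `v'` for every `v ∈ L`: the twin `v'`
is adjacent to `v` and to all neighbours of `v`. -/
def twinAdj (G : SimpleGraph V) (L : Set V) : (V ⊕ ↥L) → (V ⊕ ↥L) → Prop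
  | Sum.inl u, Sum.inl v => G.Adj u v
  | Sum.inl u, Sum.inr v => u = v.1 ∨ G.Adj u v.1
  | Sum.inr v, Sum.inl u => u = v.1 ∨ G.Adj u v.1
  | Sum.inr u, Sum.inr v => G.Adj u.1 v.1

/-- The graph obtained from `G` by creating a twin for every vertex in `L`. -/
def addTwins (G : SimpleGraph V) (L : Set V) : SimpleGraph (V ⊕ ↥L) where
  Adj := twinAdj G L
  symm := by
    constructor
    rintro (u | u) (v | v) h <;> simp only [twinAdj] at h ⊢
    · exact h.symm
    · exact h
    · exact h
    · exact h.symm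
  loopless := by
    constructor
    rintro (u | u) h <;> simp only [twinAdj] at h
    · exact G.loopless.1 _ h
    · exact G.loopless.1 _ h

/-- The matching consisting of the pairs (leaf, its twin). -/
def twinM (L : Set V) : Set ((V ⊕ ↥L) × (V ⊕ ↥L)) :=
  {e | ∃ v : ↥L, e = (Sum.inl v.1, Sum.inr v)}

/-- A graph together with a distinguished matching (as a set of ordered pairs). -/
structure GD where
  V : Type
  G : SimpleGraph V
  M : Set (V × V)

/-- `G(1,r,d)`: the complete rooted `d`-ary tree of depth `r+1` with a twin
created for every leaf. -/
def base1 (d r : ℕ) : GD :=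
  ⟨TV d r ⊕ ↥(leaves d r), addTwins (dAryTree d r) (leaves d r), twinM (leaves d r)⟩

/-- `G(k,1,d)`: the complete rooted `d`-ary tree of depth `k+1`, with edges added
between all ancestor–descendant pairs, and a twin created for every leaf. -/
def base2 (d k : ℕ) : GD :=
  ⟨TV d k ⊕ ↥(leaves d k), addTwins (dAryTreeCl d k) (leaves d k), twinM (leaves d k)⟩

/-- Adjacency of the inductive step: a copy of `A`, and for every matching edge
`e` of `A`, `d` fresh copies of `B`, each completely joined to both endpoints of `e`. -/
def stepAdj (d : ℕ) (A B : GD) :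
    (A.V ⊕ (↥A.M × Fin d × B.V)) → (A.V ⊕ (↥A.M × Fin d × B.V)) → Prop
  | Sum.inl u, Sum.inl v => A.G.Adj u v
  | Sum.inl u, Sum.inr q => u = q.1.1.1 ∨ u = q.1.1.2
  | Sum.inr q, Sum.inl u => u = q.1.1.1 ∨ u = q.1.1.2
  | Sum.inr q, Sum.inr q' => q.1 = q'.1 ∧ q.2.1 = q'.2.1 ∧ B.G.Adj q.2.2 q'.2.2

/-- The inductive step of the construction of `G(k+1,r+1,d)` from
`A = G(k+1,r,d)` and `B = G(k,r+1,d)`. -/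
def stepGD (d : ℕ) (A B : GD) : GD where
  V := A.V ⊕ (↥A.M × Fin d × B.V)
  G :=
    { Adj := stepAdj d A B
      symm := by
        constructor
        rintro (u | q) (v | q') h <;> simp only [stepAdj] at h ⊢
        · exact h.symm
        · exact h
        · exact h
        · exact ⟨h.1.symm, h.2.1.symm, h.2.2.symm⟩
      loopless := by
        constructor
        rintro (u | q) h <;> simp only [stepAdj] at h
        · exact A.G.loopless.1 _ h
        · exact B.G.loopless.1 _ h.2.2 }
  M := {q | ∃ (e : ↥A.M) (i : Fin d) (a b : B.V), (a, b) ∈ B.M ∧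
        q = (Sum.inr (e, i, a), Sum.inr (e, i, b))}

/-- The graphs `G(k,r,d)` with their matchings `M(k,r,d)`, defined for `k, r ≥ 1`
(the values at `k = 0` or `r = 0` are irrelevant placeholders). -/
def GKRD (d : ℕ) : ℕ → ℕ → GD
  | 0, r => base1 d r
  | 1, r => base1 d r
  | (k+2), 0 => base2 d (k+2)
  | (k+2), 1 => base2 d (k+2)
  | (k+2), (r+2) => stepGD d (GKRD d (k+2) (r+1)) (GKRD d (k+1) (r+2))
  termination_by k r => k + r


/-! ### Auxiliary development for `stmt_11` -/

section WalkInvariant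

lemma reach_invariant {α : Type} {H : SimpleGraph α} {P : α → Prop}
    (hP : ∀ a b, H.Adj a b → (P a ↔ P b)) {u v : α} (h : H.Reachable u v) : P u ↔ P v := by
  obtain ⟨p⟩ := h
  induction p with
  | nil => exact Iff.rfl
  | cons ha _ ih => exact (hP _ _ ha).trans ih

end WalkInvariant

section ParTree

variable {ι : Type}

/-- The graph determined by a parent function: each non-root node is joined to its parent. -/
def parTree (root : ι) (par : ι → ι) : SimpleGraph ι where
  Adj a b := a ≠ b ∧ ((a ≠ root ∧ b = par a) ∨ (b ≠ root ∧ a = par b))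
  symm := ⟨fun a b h => ⟨h.1.symm, h.2.symm⟩⟩
  loopless := ⟨fun a h => h.1 rfl⟩

variable {root : ι} {par : ι → ι} {ht : ι → ℕ}

lemma iterate_root (hroot : par root = root) : ∀ n, par^[n] root = root := by
  intro n
  induction n with
  | zero => rfl
  | succ n ih => rw [Function.iterate_succ_apply', ih, hroot]

lemma iter_bound (hroot : par root = root) (hdec : ∀ t, t ≠ root → ht (par t) < ht t) :
    ∀ n x, par^[n] x = root ∨ ht (par^[n] x) + n ≤ ht x := by
  intro n
  induction n with
  | zero => intro x; right; simp
  | succ n ih =>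
    intro x
    by_cases hx : x = root
    · left; subst hx; exact iterate_root hroot _
    · rcases ih (par x) with h | h
      · left; rwa [Function.iterate_succ_apply]
      · right
        have := hdec x hx
        rw [Function.iterate_succ_apply]
        omega

lemma iter_fixed (hroot : par root = root) (hdec : ∀ t, t ≠ root → ht (par t) < ht t)
    {x : ι} {n : ℕ} (hx : par^[n] x = x) (hn : n ≠ 0) : x = root := by
  rcases iter_bound (ht := ht) hroot hdec n x with h | h
  · rwa [hx] at h
  · rw [hx] at h; omega

lemma par_ne (hdec : ∀ t, t ≠ root → ht (par t) < ht t) {t : ι} (h : t ≠ root) :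
    t ≠ par t := by
  intro he
  have h2 := hdec t h
  rw [← he] at h2
  omega

lemma parTree_adj (hdec : ∀ t, t ≠ root → ht (par t) < ht t) {t : ι} (h : t ≠ root) :
    (parTree root par).Adj t (par t) :=
  ⟨par_ne hdec h, Or.inl ⟨h, rfl⟩⟩

lemma parTree_reach (hdec : ∀ t, t ≠ root → ht (par t) < ht t) :
    ∀ (n : ℕ) (x : ι), ht x ≤ n → (parTree root par).Reachable x root := by
  intro n
  induction n with
  | zero =>
    intro x hx
    by_cases h : x = root
    · subst h; exact SimpleGraph.Reachable.refl _
    · exact absurd (hdec x h) (by omega)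
  | succ n ih =>
    intro x hx
    by_cases h : x = root
    · subst h; exact SimpleGraph.Reachable.refl _
    · exact ((parTree_adj hdec h).reachable).trans (ih (par x) (by have := hdec x h; omega))

lemma parTree_bridge (hroot : par root = root) (hdec : ∀ t, t ≠ root → ht (par t) < ht t)
    {a : ι} (ha : a ≠ root) : (parTree root par).IsBridge s(a, par a) := by
  rw [SimpleGraph.isBridge_iff]
  intro hre
  set P : ι → Prop := fun x => ∃ n, par^[n] x = a with hP
  have hPa : P a := ⟨0, rfl⟩
  have hPpa : ¬ P (par a) := by
    rintro ⟨n, hn⟩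
    have hfix : par^[n + 1] a = a := by rw [Function.iterate_succ_apply]; exact hn
    exact ha (iter_fixed (ht := ht) hroot hdec hfix (Nat.succ_ne_zero n))
  have hstep : ∀ x y : ι, x ≠ root → y = par x → s(x, y) ≠ s(a, par a) → (P x ↔ P y) := by
    rintro x y hx rfl hne
    constructor
    · rintro ⟨n, hn⟩
      cases n with
      | zero =>
        exact absurd (by rw [show x = a from hn]) hne
      | succ n =>
        exact ⟨n, by rw [← Function.iterate_succ_apply]; exact hn⟩
    · rintro ⟨n, hn⟩
      exact ⟨n + 1, by rw [Function.iterate_succ_apply]; exact hn⟩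
  have hedge : ∀ x y : ι, ((parTree root par) \ SimpleGraph.fromEdgeSet {s(a, par a)}).Adj x y →
      (P x ↔ P y) := by
    intro x y hxy
    rw [SimpleGraph.sdiff_adj] at hxy
    obtain ⟨hadj, hnot⟩ := hxy
    have hne : s(x, y) ≠ s(a, par a) := by
      intro he
      exact hnot (by rw [SimpleGraph.fromEdgeSet_adj]; exact ⟨by simp [he], hadj.1⟩)
    rcases hadj.2 with ⟨hx, hy⟩ | ⟨hy, hx⟩
    · exact hstep x y hx hy hne
    · exact (hstep y x hy hx (by rwa [Sym2.eq_swap])).symm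
  exact hPpa ((reach_invariant hedge hre).mp hPa)

lemma parTree_isTree (hroot : par root = root) (hdec : ∀ t, t ≠ root → ht (par t) < ht t) :
    (parTree root par).IsTree := by
  constructor
  · haveI : Nonempty ι := ⟨root⟩
    exact SimpleGraph.Connected.mk (fun a b =>
      (parTree_reach (ht := ht) hdec (ht a) a le_rfl).trans
      (parTree_reach (ht := ht) hdec (ht b) b le_rfl).symm)
  · rw [SimpleGraph.isAcyclic_iff_forall_adj_isBridge]
    intro v w hvw
    rcases hvw.2 with ⟨hv, rfl⟩ | ⟨hw, rfl⟩
    · exact parTree_bridge (ht := ht) hroot hdec hv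
    · rw [Sym2.eq_swap]; exact parTree_bridge (ht := ht) hroot hdec hw

end ParTree

/-- A structured witness for a tree decomposition built on a parent function,
together with the data needed for the inductive construction. -/
structure TD (X : GD) (n : ℕ) where
  ι : Type
  root : ι
  par : ι → ι
  ht : ι → ℕ
  hb : ℕ
  hle : ∀ t, ht t ≤ hb
  hroot : par root = root
  hdec : ∀ t, t ≠ root → ht (par t) < ht t
  bag : ι → Set X.V
  bag_fin : ∀ t, (bag t).Finite
  bag_card : ∀ t, (bag t).ncard ≤ n + 1
  home : X.V → ι
  home_mem : ∀ v, v ∈ bag (home v)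
  conn : ∀ v t, v ∈ bag t → t ≠ home v → t ≠ root ∧ v ∈ bag (par t)
  edge : ∀ u v, X.G.Adj u v → ∃ t, u ∈ bag t ∧ v ∈ bag t
  match_mem : ∀ e ∈ X.M, ∃ t, e.1 ∈ bag t ∧ e.2 ∈ bag t

theorem TD.tw {X : GD} {n : ℕ} (D : TD X n) : TreewidthAtMost X.G n := by
  refine ⟨D.ι, parTree D.root D.par, D.bag,
    ⟨parTree_isTree (ht := D.ht) D.hroot D.hdec, D.edge, ?_⟩, fun t => D.bag_card t⟩
  intro v
  set S : Set D.ι := {t | v ∈ D.bag t} with hS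
  have key : ∀ (n : ℕ) (t : D.ι) (h : v ∈ D.bag t), D.ht t ≤ n →
      ((parTree D.root D.par).induce S).Reachable ⟨t, h⟩ ⟨D.home v, D.home_mem v⟩ := by
    intro n
    induction n with
    | zero =>
      intro t h hle
      by_cases he : t = D.home v
      · subst he; exact SimpleGraph.Reachable.refl _
      · obtain ⟨hnr, _⟩ := D.conn v t h he
        exact absurd (D.hdec t hnr) (by omega)
    | succ n ih =>
      intro t h hle
      by_cases he : t = D.home v
      · subst he; exact SimpleGraph.Reachable.refl _
      · obtain ⟨hnr, hm⟩ := D.conn v t h he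
        have hadj : ((parTree D.root D.par).induce S).Adj ⟨t, h⟩ ⟨D.par t, hm⟩ :=
          parTree_adj (ht := D.ht) D.hdec hnr
        exact hadj.reachable.trans (ih (D.par t) hm (by have := D.hdec t hnr; omega))
  haveI : Nonempty ↥S := ⟨⟨D.home v, D.home_mem v⟩⟩
  refine SimpleGraph.Connected.mk (fun a b => ?_)
  obtain ⟨a, ha⟩ := a
  obtain ⟨b, hb⟩ := b
  exact (key (D.ht a) a ha le_rfl).trans (key (D.ht b) b hb le_rfl).symm


section Bases

def rootTV (d n : ℕ) : TV d n := ⟨[], Nat.zero_le n⟩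

def parTV {d n : ℕ} (a : TV d n) : TV d n :=
  match a with
  | ⟨[], h⟩ => ⟨[], h⟩
  | ⟨_ :: l, h⟩ => ⟨l, Nat.le_of_succ_le h⟩

lemma parTV_root {d n : ℕ} : parTV (rootTV d n) = rootTV d n := rfl

lemma parTV_cons {d n : ℕ} {a b : TV d n} {i : Fin d} (h : a.1 = i :: b.1) : parTV a = b := by
  obtain ⟨l, hl⟩ := a
  dsimp at h
  subst h
  exact Subtype.ext rfl

lemma parTV_lt {d n : ℕ} {a : TV d n} (h : a ≠ rootTV d n) :
    (parTV a).1.length < a.1.length := by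
  obtain ⟨l, hl⟩ := a
  cases l with
  | nil => exact absurd (Subtype.ext rfl) h
  | cons i l => exact Nat.lt_succ_self _

open Classical in
noncomputable def base1TD (d r : ℕ) : TD (base1 d r) 2 where
  ι := TV d r
  root := rootTV d r
  par := parTV
  ht t := t.1.length
  hb := r
  hle t := t.2
  hroot := parTV_root
  hdec _ h := parTV_lt h
  bag t := {x | x = Sum.inl t ∨ x = Sum.inl (parTV t) ∨ ∃ h : t ∈ leaves d r, x = Sum.inr ⟨t, h⟩}
  bag_fin t := by
    apply Set.Finite.subset
      (s := ({Sum.inl t, Sum.inl (parTV t),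
        (if h : t ∈ leaves d r then Sum.inr ⟨t, h⟩ else Sum.inl t)} : Set (base1 d r).V))
      (((Set.finite_singleton _).insert _).insert _)
    rintro x (rfl | rfl | ⟨h, rfl⟩)
    · left; rfl
    · right; left; rfl
    · right; right; simp [h]; exact rfl
  bag_card t := by
    have hsub : {x | x = Sum.inl t ∨ x = Sum.inl (parTV t) ∨
        ∃ h : t ∈ leaves d r, x = Sum.inr ⟨t, h⟩} ⊆
        ({Sum.inl t, Sum.inl (parTV t),
          (if h : t ∈ leaves d r then Sum.inr ⟨t, h⟩ else Sum.inl t)} : Set (base1 d r).V) := by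
      rintro x (rfl | rfl | ⟨h, rfl⟩)
      · left; rfl
      · right; left; rfl
      · right; right; simp [h]; exact rfl
    refine le_trans (Set.ncard_le_ncard hsub
      (((Set.finite_singleton _).insert _).insert _)) ?_
    have h1 := Set.ncard_insert_le (Sum.inl t : (base1 d r).V)
      ({Sum.inl (parTV t), (if h : t ∈ leaves d r then Sum.inr ⟨t, h⟩ else Sum.inl t)} : Set _)
    have h2 := Set.ncard_insert_le (Sum.inl (parTV t) : (base1 d r).V)
      ({(if h : t ∈ leaves d r then Sum.inr ⟨t, h⟩ else Sum.inl t)} : Set _)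
    have h3 := Set.ncard_singleton
      ((if h : t ∈ leaves d r then Sum.inr ⟨t, h⟩ else Sum.inl t) : (base1 d r).V)
    exact h1.trans (Nat.succ_le_succ (h2.trans (Nat.succ_le_succ h3.le)))
  home := Sum.elim id (fun v => v.1)
  home_mem := by
    rintro (t | t)
    · exact Or.inl rfl
    · exact Or.inr (Or.inr ⟨t.2, rfl⟩)
  conn := by
    rintro v t hv hne
    rcases hv with rfl | rfl | ⟨h, rfl⟩
    · exact absurd rfl hne
    · refine ⟨?_, Or.inl rfl⟩
      rintro rfl
      exact hne parTV_root.symm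
    · exact absurd rfl hne
  edge := by
    rintro (a | a) (b | b) hab
    · have h : (∃ i : Fin d, a.1 = i :: b.1) ∨ (∃ i : Fin d, b.1 = i :: a.1) := hab
      rcases h with ⟨i, hi⟩ | ⟨i, hi⟩
      · exact ⟨a, Or.inl rfl, Or.inr (Or.inl (by rw [parTV_cons hi]))⟩
      · exact ⟨b, Or.inr (Or.inl (by rw [parTV_cons hi])), Or.inl rfl⟩
    · have h : a = b.1 ∨ ((∃ i : Fin d, a.1 = i :: b.1.1) ∨
          (∃ i : Fin d, b.1.1 = i :: a.1)) := hab
      refine ⟨b.1, ?_, Or.inr (Or.inr ⟨b.2, rfl⟩)⟩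
      rcases h with h | ⟨i, hi⟩ | ⟨i, hi⟩
      · exact Or.inl (by rw [h])
      · exfalso
        have h1 : a.1.length = b.1.1.length + 1 := by rw [hi]; rfl
        have h2 := a.2
        have h3 : b.1.1.length = r := b.2
        omega
      · exact Or.inr (Or.inl (by rw [parTV_cons hi]))
    · have h : b = a.1 ∨ ((∃ i : Fin d, b.1 = i :: a.1.1) ∨
          (∃ i : Fin d, a.1.1 = i :: b.1)) := hab
      refine ⟨a.1, Or.inr (Or.inr ⟨a.2, rfl⟩), ?_⟩
      rcases h with h | ⟨i, hi⟩ | ⟨i, hi⟩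
      · exact Or.inl (by rw [h])
      · exfalso
        have h1 : b.1.length = a.1.1.length + 1 := by rw [hi]; rfl
        have h2 := b.2
        have h3 : a.1.1.length = r := a.2
        omega
      · exact Or.inr (Or.inl (by rw [parTV_cons hi]))
    · have h : (∃ i : Fin d, a.1.1 = i :: b.1.1) ∨ (∃ i : Fin d, b.1.1 = i :: a.1.1) := hab
      exfalso
      have ha : a.1.1.length = r := a.2
      have hb : b.1.1.length = r := b.2
      rcases h with ⟨i, hi⟩ | ⟨i, hi⟩
      · have : a.1.1.length = b.1.1.length + 1 := by rw [hi]; rfl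
        omega
      · have : b.1.1.length = a.1.1.length + 1 := by rw [hi]; rfl
        omega
  match_mem := by
    rintro e ⟨v, rfl⟩
    exact ⟨v.1, Or.inl rfl, Or.inr (Or.inr ⟨v.2, rfl⟩)⟩

end Bases


section Base2

def dropTV {d n : ℕ} (t : TV d n) (j : ℕ) : TV d n :=
  ⟨t.1.drop j, by rw [List.length_drop]; exact le_trans (Nat.sub_le _ _) t.2⟩

open Classical in
noncomputable def base2TD (d k : ℕ) (hk : 1 ≤ k) : TD (base2 d k) (2 * k) where
  ι := TV d k
  root := rootTV d k
  par := parTV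
  ht t := t.1.length
  hb := k
  hle t := t.2
  hroot := parTV_root
  hdec _ h := parTV_lt h
  bag t := {x | (∃ s : TV d k, s.1 <:+ t.1 ∧ x = Sum.inl s) ∨
      ∃ h : t ∈ leaves d k, x = Sum.inr ⟨t, h⟩}
  bag_fin t := by
    apply Set.Finite.subset
      (s := ((fun j : ℕ => (Sum.inl (dropTV t j) : (base2 d k).V)) '' Set.Iic t.1.length) ∪
        {(if h : t ∈ leaves d k then Sum.inr ⟨t, h⟩ else Sum.inl t)})
      (((Set.finite_Iic _).image _).union (Set.finite_singleton _))
    rintro x (⟨s, hs, rfl⟩ | ⟨h, rfl⟩)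
    · obtain ⟨pre, hpre⟩ := hs
      refine Or.inl ⟨pre.length, ?_, ?_⟩
      · rw [← hpre]; simp
      · have : dropTV t pre.length = s := Subtype.ext (by
          show t.1.drop pre.length = s.1
          rw [← hpre, List.drop_left])
        show Sum.inl (dropTV t pre.length) = Sum.inl s
        rw [this]
    · exact Or.inr (by simp [h])
  bag_card t := by
    have hsub : {x | (∃ s : TV d k, s.1 <:+ t.1 ∧ x = Sum.inl s) ∨
        ∃ h : t ∈ leaves d k, x = Sum.inr ⟨t, h⟩} ⊆
        ((fun j : ℕ => (Sum.inl (dropTV t j) : (base2 d k).V)) '' Set.Iic t.1.length) ∪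
          {(if h : t ∈ leaves d k then Sum.inr ⟨t, h⟩ else Sum.inl t)} := by
      rintro x (⟨s, hs, rfl⟩ | ⟨h, rfl⟩)
      · obtain ⟨pre, hpre⟩ := hs
        refine Or.inl ⟨pre.length, ?_, ?_⟩
        · rw [← hpre]; simp
        · have : dropTV t pre.length = s := Subtype.ext (by
            show t.1.drop pre.length = s.1
            rw [← hpre, List.drop_left])
          show Sum.inl (dropTV t pre.length) = Sum.inl s
          rw [this]
      · exact Or.inr (by simp [h])
    refine le_trans (Set.ncard_le_ncard hsub
      (((Set.finite_Iic _).image _).union (Set.finite_singleton _))) ?_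
    refine le_trans (Set.ncard_union_le _ _) ?_
    have h1 : ((fun j : ℕ => (Sum.inl (dropTV t j) : (base2 d k).V)) ''
        Set.Iic t.1.length).ncard ≤ (Set.Iic t.1.length).ncard :=
      Set.ncard_image_le (Set.finite_Iic _)
    have h2 : (Set.Iic t.1.length).ncard = t.1.length + 1 := by
      rw [← Finset.coe_Iic, Set.ncard_coe_finset, Nat.card_Iic]
    have h3 := Set.ncard_singleton
      ((if h : t ∈ leaves d k then Sum.inr ⟨t, h⟩ else Sum.inl t) : (base2 d k).V)
    have h4 := t.2
    exact (Nat.add_le_add (h1.trans (h2.le.trans (Nat.succ_le_succ h4))) h3.le).trans (by omega)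
  home := Sum.elim id (fun v => v.1)
  home_mem := by
    rintro (t | t)
    · exact Or.inl ⟨t, List.suffix_refl _, rfl⟩
    · exact Or.inr ⟨t.2, rfl⟩
  conn := by
    rintro v t hv hne
    rcases hv with ⟨s, hs, rfl⟩ | ⟨h, rfl⟩
    · obtain ⟨l, hl⟩ := t
      cases l with
      | nil =>
        exact absurd (Subtype.ext (List.suffix_nil.mp hs).symm) hne
      | cons i l =>
        refine ⟨fun habs => List.cons_ne_nil i l (congrArg Subtype.val habs), ?_⟩
        rcases List.suffix_cons_iff.mp hs with h | h
        · exact absurd (Subtype.ext h).symm hne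
        · exact Or.inl ⟨s, h, rfl⟩
    · exact absurd rfl hne
  edge := by
    rintro (a | a) (b | b) hab
    · have h : a ≠ b ∧ (a.1 <:+ b.1 ∨ b.1 <:+ a.1) := hab
      rcases h.2 with h2 | h2
      · exact ⟨b, Or.inl ⟨a, h2, rfl⟩, Or.inl ⟨b, List.suffix_refl _, rfl⟩⟩
      · exact ⟨a, Or.inl ⟨a, List.suffix_refl _, rfl⟩, Or.inl ⟨b, h2, rfl⟩⟩
    · have h : a = b.1 ∨ (a ≠ b.1 ∧ (a.1 <:+ b.1.1 ∨ b.1.1 <:+ a.1)) := hab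
      refine ⟨b.1, ?_, Or.inr ⟨b.2, rfl⟩⟩
      rcases h with h | ⟨hne, h2 | h2⟩
      · exact Or.inl ⟨b.1, List.suffix_refl _, by rw [h]⟩
      · exact Or.inl ⟨a, h2, rfl⟩
      · exfalso
        have hl := h2.length_le
        have hbl : b.1.1.length = k := b.2
        have hal := a.2
        have heq : b.1.1 = a.1 := h2.eq_of_length (by omega)
        exact hne (Subtype.ext heq.symm)
    · have h : b = a.1 ∨ (b ≠ a.1 ∧ (b.1 <:+ a.1.1 ∨ a.1.1 <:+ b.1)) := hab
      refine ⟨a.1, Or.inr ⟨a.2, rfl⟩, ?_⟩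
      rcases h with h | ⟨hne, h2 | h2⟩
      · exact Or.inl ⟨a.1, List.suffix_refl _, by rw [h]⟩
      · exact Or.inl ⟨b, h2, rfl⟩
      · exfalso
        have hl := h2.length_le
        have hbl : a.1.1.length = k := a.2
        have hal := b.2
        have heq : a.1.1 = b.1 := h2.eq_of_length (by omega)
        exact hne (Subtype.ext heq.symm)
    · have h : a.1 ≠ b.1 ∧ (a.1.1 <:+ b.1.1 ∨ b.1.1 <:+ a.1.1) := hab
      exfalso
      have ha : a.1.1.length = k := a.2
      have hb : b.1.1.length = k := b.2
      rcases h.2 with h2 | h2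
      · exact h.1 (Subtype.ext (h2.eq_of_length (by omega)))
      · exact h.1 (Subtype.ext (h2.eq_of_length (by omega)).symm)
  match_mem := by
    rintro e ⟨v, rfl⟩
    exact ⟨v.1, Or.inl ⟨v.1, List.suffix_refl _, rfl⟩, Or.inr ⟨v.2, rfl⟩⟩

end Base2


section Step

open Classical in
noncomputable def stepTD {d n m : ℕ} {A B : GD} (TA : TD A n) (TB : TD B m)
    (hnm : m + 2 ≤ n) : TD (stepGD d A B) n where
  ι := TA.ι ⊕ (↥A.M × Fin d × TB.ι)
  root := Sum.inl TA.root
  par := Sum.elim (fun t => Sum.inl (TA.par t))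
    (fun q => if q.2.2 = TB.root then Sum.inl ((TA.match_mem q.1.1 q.1.2).choose)
      else Sum.inr (q.1, q.2.1, TB.par q.2.2))
  ht := Sum.elim TA.ht (fun q => TA.hb + 1 + TB.ht q.2.2)
  hb := TA.hb + 1 + TB.hb
  hle := by
    rintro (t | q)
    · simp only [Sum.elim_inl]
      have := TA.hle t
      omega
    · simp only [Sum.elim_inr]
      have := TB.hle q.2.2
      omega
  hroot := by
    simp only [Sum.elim_inl, TA.hroot]
  hdec := by
    rintro (t | q) h
    · have ht' : t ≠ TA.root := fun he => h (by rw [he])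
      simp only [Sum.elim_inl]
      exact TA.hdec t ht'
    · simp only [Sum.elim_inr]
      split_ifs with hs
      · simp only [Sum.elim_inl]
        have := TA.hle ((TA.match_mem q.1.1 q.1.2).choose)
        omega
      · simp only [Sum.elim_inr]
        have := TB.hdec q.2.2 hs
        omega
  bag := Sum.elim (fun t => Sum.inl '' TA.bag t)
    (fun q => ((fun b => (Sum.inr (q.1, q.2.1, b) : (stepGD d A B).V)) '' TB.bag q.2.2) ∪
      {Sum.inl q.1.1.1, Sum.inl q.1.1.2})
  bag_fin := by
    rintro (t | q)
    · exact (TA.bag_fin t).image _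
    · exact ((TB.bag_fin q.2.2).image _).union (((Set.finite_singleton _).insert _))
  bag_card := by
    rintro (t | q)
    · simp only [Sum.elim_inl]
      refine (Set.ncard_image_of_injective _ Sum.inl_injective).trans_le ?_
      exact TA.bag_card t
    · simp only [Sum.elim_inr]
      refine le_trans (Set.ncard_union_le _ _) ?_
      have hinj : Function.Injective
          (fun b => (Sum.inr (q.1, q.2.1, b) : (stepGD d A B).V)) := by
        intro x y hxy
        simpa using hxy
      change ((fun b => (Sum.inr (q.1, q.2.1, b) : (stepGD d A B).V)) '' TB.bag q.2.2).ncard +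
        ({Sum.inl q.1.1.1, Sum.inl q.1.1.2} : Set (stepGD d A B).V).ncard ≤ n + 1
      rw [Set.ncard_image_of_injective _ hinj]
      have h1 := TB.bag_card q.2.2
      have h2 := Set.ncard_insert_le (Sum.inl q.1.1.1 : (stepGD d A B).V) {Sum.inl q.1.1.2}
      have h3 := Set.ncard_singleton (Sum.inl q.1.1.2 : (stepGD d A B).V)
      exact (Nat.add_le_add h1 (h2.trans (Nat.succ_le_succ h3.le))).trans (by omega)
  home := Sum.elim (fun u => Sum.inl (TA.home u))
    (fun q => Sum.inr (q.1, q.2.1, TB.home q.2.2))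
  home_mem := by
    rintro (u | q)
    · exact ⟨u, TA.home_mem u, rfl⟩
    · exact Or.inl ⟨q.2.2, TB.home_mem q.2.2, rfl⟩
  conn := by
    rintro v (t | q) hv hne
    · simp only [Sum.elim_inl] at hv
      obtain ⟨u, hu, rfl⟩ := hv
      have ht' : t ≠ TA.home u := fun he => hne (by rw [he]; rfl)
      obtain ⟨hnr, hm⟩ := TA.conn u t hu ht'
      refine ⟨fun he => hnr (Sum.inl_injective he), ?_⟩
      simp only [Sum.elim_inl]
      exact ⟨u, hm, rfl⟩
    · refine ⟨by simp, ?_⟩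
      simp only [Sum.elim_inr] at hv ⊢
      rcases hv with ⟨b, hb, rfl⟩ | hv
      · have hq : q.2.2 ≠ TB.home b := fun he => hne (by
          show (Sum.inr q : TA.ι ⊕ (↥A.M × Fin d × TB.ι)) = Sum.inr (q.1, q.2.1, TB.home b)
          rw [← he])
        obtain ⟨hnr, hm⟩ := TB.conn b q.2.2 hb hq
        rw [if_neg hnr]
        simp only [Sum.elim_inr]
        exact Or.inl ⟨b, hm, rfl⟩
      · split_ifs with hs
        · simp only [Sum.elim_inl]
          rcases hv with rfl | rfl
          · exact ⟨_, (TA.match_mem q.1.1 q.1.2).choose_spec.1, rfl⟩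
          · exact ⟨_, (TA.match_mem q.1.1 q.1.2).choose_spec.2, rfl⟩
        · simp only [Sum.elim_inr]
          exact Or.inr hv
  edge := by
    rintro (u | p) (v | p') hadj
    · have h : A.G.Adj u v := hadj
      obtain ⟨t, h1, h2⟩ := TA.edge u v h
      exact ⟨Sum.inl t, ⟨u, h1, rfl⟩, ⟨v, h2, rfl⟩⟩
    · have h : u = p'.1.1.1 ∨ u = p'.1.1.2 := hadj
      refine ⟨Sum.inr (p'.1, p'.2.1, TB.home p'.2.2), ?_,
        Or.inl ⟨p'.2.2, TB.home_mem p'.2.2, rfl⟩⟩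
      rcases h with rfl | rfl
      · exact Or.inr (Or.inl rfl)
      · exact Or.inr (Or.inr rfl)
    · have h : v = p.1.1.1 ∨ v = p.1.1.2 := hadj
      refine ⟨Sum.inr (p.1, p.2.1, TB.home p.2.2),
        Or.inl ⟨p.2.2, TB.home_mem p.2.2, rfl⟩, ?_⟩
      rcases h with rfl | rfl
      · exact Or.inr (Or.inl rfl)
      · exact Or.inr (Or.inr rfl)
    · have h : p.1 = p'.1 ∧ p.2.1 = p'.2.1 ∧ B.G.Adj p.2.2 p'.2.2 := hadj
      obtain ⟨s, h1, h2⟩ := TB.edge _ _ h.2.2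
      refine ⟨Sum.inr (p.1, p.2.1, s), Or.inl ⟨p.2.2, h1, rfl⟩,
        Or.inl ⟨p'.2.2, h2, by rw [h.1, h.2.1]⟩⟩
  match_mem := by
    rintro e' ⟨e, i, a, b, hab, rfl⟩
    obtain ⟨s, h1, h2⟩ := TB.match_mem (a, b) hab
    exact ⟨Sum.inr (e, i, s), Or.inl ⟨a, h1, rfl⟩, Or.inl ⟨b, h2, rfl⟩⟩

end Step

lemma tdGKRD (d : ℕ) : ∀ (N k r : ℕ), k + r ≤ N → 1 ≤ k → 1 ≤ r →
    Nonempty (TD (GKRD d k r) (2 * k)) := by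
  intro N
  induction N with
  | zero => intro k r h hk hr; omega
  | succ N ih =>
    intro k r hN hk hr
    rcases k with _ | _ | k
    · omega
    · have he : GKRD d 1 r = base1 d r := by rw [GKRD]
      rw [he]
      exact ⟨base1TD d r⟩
    · rcases r with _ | _ | r
      · omega
      · have he : GKRD d (k + 2) 1 = base2 d (k + 2) := by rw [GKRD]
        rw [he]
        exact ⟨base2TD d (k + 2) (by omega)⟩
      · obtain ⟨TA⟩ := ih (k + 2) (r + 1) (by omega) (by omega) (by omega)
        obtain ⟨TB⟩ := ih (k + 1) (r + 2) (by omega) (by omega) (by omega)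
        have he : GKRD d (k + 2) (r + 2) =
            stepGD d (GKRD d (k + 2) (r + 1)) (GKRD d (k + 1) (r + 2)) := by rw [GKRD]
        rw [he]
        exact ⟨stepTD TA TB (by omega)⟩


theorem stmt_11 (d k r : ℕ) (hd : 1 ≤ d) (hk : 1 ≤ k) (hr : 1 ≤ r) :
    TreewidthAtMost (GKRD d k r).G (2 * k) := by
  obtain ⟨D⟩ := tdGKRD d (k + r) k r le_rfl hk hr
  exact D.tw

end ScatterDim
end

section
/- Fix an integer n ≥ 1 and reals ε, ε' with 0 < ε ≤ 1 and 0 ≤ ε' < ε. Let (V,dist) be the metric space on the 2n points p_1,…,p_n,x_1,…,x_n with dist(p_i,x_i) = 1+ε for all i, dist(p_i,x_j) = 1 for all i ≠ j, and dist(p_i,p_j) = dist(x_i,x_j) = 2 for all i ≠ j (this is indeed a metric). Then the only subset C ⊆ {p_1,…,p_n} satisfying max_{1≤i≤n} dist(p_i, x_j) ≤ (1+ε') · max_{p∈C} dist(p, x_j) for every j ∈ [n] is C = {p_1,…,p_n}. In particular, for k = 1 every coreset for k-Center on this instance with accuracy better than 1+ε must contain all n clients. -/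
open scoped ENNReal

namespace ScatterDim

variable {V : Type}


theorem stmt_14 (n : ℕ) (hn : 1 ≤ n) (ε ε' : ℝ) (hε0 : 0 < ε) (hε1 : ε ≤ 1)
    (hε'0 : 0 ≤ ε') (hε' : ε' < ε)
    (d : (Fin n ⊕ Fin n) → (Fin n ⊕ Fin n) → ℝ)
    (hpp : ∀ i j : Fin n, d (Sum.inl i) (Sum.inl j) = if i = j then 0 else 2)
    (hxx : ∀ i j : Fin n, d (Sum.inr i) (Sum.inr j) = if i = j then 0 else 2)
    (hpx : ∀ i j : Fin n, d (Sum.inl i) (Sum.inr j) = if i = j then 1 + ε else 1)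
    (hxp : ∀ i j : Fin n, d (Sum.inr i) (Sum.inl j) = if i = j then 1 + ε else 1) :
    ((∀ a b, d a b = d b a) ∧ (∀ a, d a a = 0) ∧ (∀ a b, a ≠ b → 0 < d a b) ∧
      (∀ a b e, d a e ≤ d a b + d b e)) ∧
    ∀ C : Set (Fin n),
      (∀ j : Fin n,
        (⨆ i : Fin n, d (Sum.inl i) (Sum.inr j)) ≤
          (1 + ε') * sSup ((fun i => d (Sum.inl i) (Sum.inr j)) '' C)) →
      C = Set.univ := by
  have hdiag : ∀ a, d a a = 0 := by
    rintro (i | i) <;> simp [hpp, hxx]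
  have hlow : ∀ a b, a ≠ b → 1 ≤ d a b := by
    rintro (i | i) (j | j) hab
    · have : i ≠ j := fun h => hab (by rw [h])
      simp [hpp, this]
    · rw [hpx]; split_ifs <;> linarith
    · rw [hxp]; split_ifs <;> linarith
    · have : i ≠ j := fun h => hab (by rw [h])
      simp [hxx, this]
  have hhigh : ∀ a b, d a b ≤ 2 := by
    rintro (i | i) (j | j)
    · rw [hpp]; split_ifs <;> linarith
    · rw [hpx]; split_ifs <;> linarith
    · rw [hxp]; split_ifs <;> linarith
    · rw [hxx]; split_ifs <;> linarith
  have hsymm : ∀ a b, d a b = d b a := by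
    rintro (i | i) (j | j)
    · rw [hpp, hpp]; by_cases h : i = j <;> simp [h, eq_comm]
    · rw [hpx, hxp]; by_cases h : i = j <;> simp [h, eq_comm]
    · rw [hxp, hpx]; by_cases h : i = j <;> simp [h, eq_comm]
    · rw [hxx, hxx]; by_cases h : i = j <;> simp [h, eq_comm]
  have hnneg : ∀ a b, 0 ≤ d a b := by
    intro a b
    by_cases h : a = b
    · rw [h, hdiag]
    · linarith [hlow a b h]
  refine ⟨⟨hsymm, hdiag, ?_, ?_⟩, ?_⟩
  · intro a b hab; linarith [hlow a b hab]
  · intro a b e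
    by_cases hae : a = e
    · rw [hae, hdiag]; linarith [hnneg e b, hnneg b e]
    by_cases hba : b = a
    · rw [hba, hdiag]; linarith [hnneg a e]
    by_cases hbe : b = e
    · rw [hbe, hdiag]; linarith [hnneg a e]
    · have h1 := hlow a b (fun h => hba h.symm)
      have h2 := hlow b e hbe
      have h3 := hhigh a e
      linarith
  · intro C hC
    by_contra hne
    obtain ⟨j, hj⟩ : ∃ j : Fin n, j ∉ C := by
      by_contra h
      push_neg at h
      exact hne (Set.eq_univ_of_forall h)
    have hle := hC j
    have hub : sSup ((fun i => d (Sum.inl i) (Sum.inr j)) '' C) ≤ 1 := by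
      apply Real.sSup_le
      · rintro x ⟨i, hiC, rfl⟩
        have hij : i ≠ j := fun h => hj (h ▸ hiC)
        simp [hpx, hij]
      · linarith
    have hlb : (1 + ε : ℝ) ≤ ⨆ i : Fin n, d (Sum.inl i) (Sum.inr j) := by
      have : d (Sum.inl j) (Sum.inr j) = 1 + ε := by simp [hpx]
      rw [← this]
      exact le_ciSup (f := fun i => d (Sum.inl i) (Sum.inr j)) (Set.Finite.bddAbove (Set.finite_range _)) j
    have : (1 + ε') * sSup ((fun i => d (Sum.inl i) (Sum.inr j)) '' C) ≤ 1 + ε' := by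
      nlinarith
    linarith

end ScatterDim
end
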